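/- arXiv:1607.00264 — 2 statements merged into one kernel-verified Lean document; each statement's English description precedes it below -/
import Mathlib

section
/- Let K = ℝ or ℂ, let f and g be nonzero polynomials in K[x₁,…,xₙ], and let S ⊂ Kⁿ be connected. Then fg is valuation-invariant in S (i.e., v_α(fg) is constant for α ∈ S) if and only if both f and g are valuation-invariant in S. -/
open MvPolynomial

/-- The Lazard valuation of a polynomial `f` at a point `α`: the lexicographically
least exponent vector occurring in the expansion of `f` about `α`. -/
noncomputable def lazardVal {K : Type*} [CommRing K] {n : ℕ}
    (α : Fin n → K) (f : MvPolynomial (Fin n) K) : Lex (Fin n →₀ ℕ) :=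
  WithTop.untopD (toLex 0) (((MvPolynomial.bind₁ (fun i => X i + C (α i)) f).support.image toLex).min)

/-- A polynomial is valuation-invariant in a set `S` if its Lazard valuation is the
same at every point of `S`. -/
def ValuationInvariant {K : Type*} [CommRing K] {n : ℕ}
    (f : MvPolynomial (Fin n) K) (S : Set (Fin n → K)) : Prop :=
  ∀ α ∈ S, ∀ β ∈ S, lazardVal α f = lazardVal β f

/-!
Expanding about `α` is the algebra automorphism `taylorShift α`, and `lazardVal α f` is the
lexicographic order of `taylorShift α f` viewed as a power series; lexicographic orders add under
multiplication over a domain. The coefficients of `taylorShift α f` are polynomial in `α`, so the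
valuation can only drop near a point. If `v(f) + v(g)` is constant on `S`, neither summand can drop
near a point of `S`, so both are locally constant on `S`, hence constant as `S` is connected.
-/

open Filter Topology

namespace MvPolynomial

variable {σ R : Type*}

noncomputable def taylorShift [CommSemiring R] (α : σ → R) :
    MvPolynomial σ R →ₐ[R] MvPolynomial σ R :=
  bind₁ fun i => X i + C (α i)

theorem taylorShift_injective [CommRing R] (α : σ → R) : Function.Injective (taylorShift α) := by
  refine Function.LeftInverse.injective (g := bind₁ fun i => X i - C (α i)) fun p => ?_
  simp [taylorShift, bind₁_bind₁]

theorem continuous_coeff_taylorShift [CommSemiring R] [TopologicalSpace R]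
    [IsTopologicalSemiring R] (f : MvPolynomial σ R) (m : σ →₀ ℕ) :
    Continuous fun α : σ → R => coeff m (taylorShift α f) := by
  classical
  induction f using MvPolynomial.induction_on generalizing m with
  | C a => simpa [taylorShift] using continuous_const
  | add p q hp hq =>
    simp only [map_add, coeff_add]
    exact (hp m).add (hq m)
  | mul_X p i hp =>
    simp only [taylorShift, map_mul, bind₁_X_right, mul_add, coeff_add, coeff_mul_X',
      mul_comm _ (C _), coeff_C_mul]
    refine Continuous.add ?_ ((continuous_apply i).mul (hp m))
    split_ifs
    · exact hp _
    · exact continuous_const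

theorem min_image_toLex_support_eq_lexOrder [CommSemiring R] [LinearOrder σ] [WellFoundedGT σ]
    (p : MvPolynomial σ R) :
    (p.support.image toLex).min = MvPowerSeries.lexOrder (p : MvPowerSeries σ R) := by
  refine le_antisymm (MvPowerSeries.le_lexOrder_iff.2 fun d hd => ?_) (Finset.le_min ?_)
  · by_contra h
    exact not_lt_of_ge (Finset.min_le (Finset.mem_image_of_mem toLex (mem_support_iff.2 h))) hd
  · simp only [Finset.mem_image, mem_support_iff]
    rintro _ ⟨d, hd, rfl⟩
    exact MvPowerSeries.lexOrder_le_of_coeff_ne_zero hd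

end MvPolynomial

theorem IsPreconnected.apply_eq_of_eventually_eq {X Y : Type*} [TopologicalSpace X] {S : Set X}
    (hS : IsPreconnected S) {f : X → Y} (hf : ∀ x ∈ S, ∀ᶠ y in 𝓝[S] x, f y = f x)
    {x y : X} (hx : x ∈ S) (hy : y ∈ S) : f x = f y := by
  let : TopologicalSpace Y := ⊥
  have : DiscreteTopology Y := ⟨rfl⟩
  refine hS.constant (fun z hz => ?_) hx hy
  rw [ContinuousWithinAt, nhds_discrete]
  exact tendsto_pure.2 (hf z hz)

theorem IsPreconnected.apply_eq_of_add_eq_of_eventually_le {X M : Type*} [TopologicalSpace X]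
    [Add M] [PartialOrder M] [AddLeftStrictMono M] [AddRightStrictMono M] {S : Set X}
    (hS : IsPreconnected S) {u v : X → M} (hu : ∀ x, ∀ᶠ y in 𝓝 x, u y ≤ u x)
    (hv : ∀ x, ∀ᶠ y in 𝓝 x, v y ≤ v x) (huv : ∀ x ∈ S, ∀ y ∈ S, u x + v x = u y + v y)
    {x y : X} (hx : x ∈ S) (hy : y ∈ S) : u x = u y ∧ v x = v y :=
  Prod.ext_iff.1 <| hS.apply_eq_of_eventually_eq (f := fun x => (u x, v x)) (fun x hx => by
    filter_upwards [nhdsWithin_le_nhds (hu x), nhdsWithin_le_nhds (hv x), self_mem_nhdsWithin]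
      with y huy hvy hy
    exact Prod.ext_iff.2 ((add_eq_add_iff_eq_and_eq huy hvy).1 (huv y hy x hx))) hx hy

section LazardValuation

variable {K : Type*} {n : ℕ}

theorem coe_lazardVal [CommRing K] {f : MvPolynomial (Fin n) K} (α : Fin n → K) (hf : f ≠ 0) :
    (lazardVal α f : WithTop (Lex (Fin n →₀ ℕ))) =
      MvPowerSeries.lexOrder (taylorShift α f : MvPowerSeries (Fin n) K) := by
  have hne : MvPowerSeries.lexOrder (taylorShift α f : MvPowerSeries (Fin n) K) ≠ ⊤ := by
    rw [Ne, MvPowerSeries.lexOrder_eq_top_iff_eq_zero, coe_eq_zero_iff,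
      map_eq_zero_iff _ (taylorShift_injective α)]
    exact hf
  rw [lazardVal, ← taylorShift, min_image_toLex_support_eq_lexOrder, ← WithTop.coe_untop _ hne,
    WithTop.untopD_coe]

theorem lazardVal_le_of_coeff_ne_zero [CommRing K] {f : MvPolynomial (Fin n) K} {α : Fin n → K}
    {m : Fin n →₀ ℕ} (h : coeff m (taylorShift α f) ≠ 0) : lazardVal α f ≤ toLex m := by
  have hf : f ≠ 0 := by rintro rfl; simp at h
  rw [← WithTop.coe_le_coe, coe_lazardVal α hf]
  exact MvPowerSeries.lexOrder_le_of_coeff_ne_zero (by rwa [coeff_coe])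

theorem coeff_lazardVal_ne_zero [CommRing K] {f : MvPolynomial (Fin n) K} (α : Fin n → K)
    (hf : f ≠ 0) : coeff (ofLex (lazardVal α f)) (taylorShift α f) ≠ 0 := by
  rw [← coeff_coe]
  exact MvPowerSeries.coeff_ne_zero_of_lexOrder (by rw [toLex_ofLex, coe_lazardVal α hf])

theorem lazardVal_mul [CommRing K] [IsDomain K] {f g : MvPolynomial (Fin n) K} (α : Fin n → K)
    (hf : f ≠ 0) (hg : g ≠ 0) : lazardVal α (f * g) = lazardVal α f + lazardVal α g := by
  rw [← WithTop.coe_inj, WithTop.coe_add, coe_lazardVal α (mul_ne_zero hf hg), coe_lazardVal α hf,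
    coe_lazardVal α hg, map_mul, coe_mul, MvPowerSeries.lexOrder_mul]

theorem eventually_lazardVal_le [CommRing K] [TopologicalSpace K] [IsTopologicalRing K] [T1Space K]
    {f : MvPolynomial (Fin n) K} (hf : f ≠ 0) (α : Fin n → K) :
    ∀ᶠ β in 𝓝 α, lazardVal β f ≤ lazardVal α f := by
  filter_upwards [((continuous_coeff_taylorShift f _).continuousAt (x := α)).eventually_ne
    (coeff_lazardVal_ne_zero α hf)] with β hβ
  exact lazardVal_le_of_coeff_ne_zero hβ

end LazardValuation

/-- For `K = ℝ` or `ℂ` (any `RCLike` field), nonzero polynomials `f, g` and a connected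
subset `S ⊆ Kⁿ` (in the classical topology), the product `fg` is valuation-invariant
in `S` iff both `f` and `g` are valuation-invariant in `S`. -/
theorem valuationInvariant_mul_iff {K : Type*} [RCLike K] {n : ℕ}
    (f g : MvPolynomial (Fin n) K) (hf : f ≠ 0) (hg : g ≠ 0)
    (S : Set (Fin n → K)) (hS : IsConnected S) :
    ValuationInvariant (f * g) S ↔ ValuationInvariant f S ∧ ValuationInvariant g S := by
  simp only [ValuationInvariant, lazardVal_mul _ hf hg]
  refine ⟨fun h => ?_, fun ⟨hf', hg'⟩ α hα β hβ => by rw [hf' α hα β hβ, hg' α hα β hβ]⟩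
  have hboth (α) (hα : α ∈ S) (β) (hβ : β ∈ S) :=
    hS.isPreconnected.apply_eq_of_add_eq_of_eventually_le
      (eventually_lazardVal_le hf) (eventually_lazardVal_le hg) h hα hβ
  exact ⟨fun α hα β hβ => (hboth α hα β hβ).1, fun α hα β hβ => (hboth α hα β hβ).2⟩
end

section
/- Let f ∈ K[x₁,…,xₙ] be nonzero, α ∈ K^{n−1}, and let (v₁,…,v_{n−1}) be the nonnegative integers produced by the Lazard evaluation process of f at α. Then f(α, xₙ) is identically zero (as a polynomial in xₙ) if and only if v_i > 0 for some i with 1 ≤ i ≤ n−1. -/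
open MvPolynomial Polynomial

/-- One step of the Lazard evaluation process: view `f` as a polynomial in the first
variable, divide out the highest power of `(x₀ - a)` dividing it, then substitute
`x₀ = a`. -/
noncomputable def lazardStep {K : Type*} [Field K] {n : ℕ} (a : K)
    (f : MvPolynomial (Fin (n + 1)) K) : MvPolynomial (Fin n) K :=
  Polynomial.eval (MvPolynomial.C a)
    ((MvPolynomial.finSuccEquiv K n f) /ₘ
      ((Polynomial.X - Polynomial.C (MvPolynomial.C a)) ^
        ((MvPolynomial.finSuccEquiv K n f).rootMultiplicity (MvPolynomial.C a))))

/-- The Lazard evaluation `f_α(xₙ)` of `f ∈ K[x₀,…,xₙ]` at `α ∈ Kⁿ`. -/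
noncomputable def lazardEval {K : Type*} [Field K] :
    {n : ℕ} → MvPolynomial (Fin (n + 1)) K → (Fin n → K) → Polynomial K
  | 0, f, _ =>
      Polynomial.map (MvPolynomial.isEmptyRingEquiv K (Fin 0)).toRingHom
        (MvPolynomial.finSuccEquiv K 0 f)
  | _ + 1, f, α => lazardEval (lazardStep (α 0) f) (Fin.tail α)

/-- The exponents `v₁,…,vₙ` produced by the Lazard evaluation process. -/
noncomputable def lazardExps {K : Type*} [Field K] :
    {n : ℕ} → MvPolynomial (Fin (n + 1)) K → (Fin n → K) → (Fin n → ℕ)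
  | 0, _, _ => fun i => i.elim0
  | _ + 1, f, α =>
      Fin.cons ((MvPolynomial.finSuccEquiv K _ f).rootMultiplicity (MvPolynomial.C (α 0)))
        (lazardExps (lazardStep (α 0) f) (Fin.tail α))

/-!
Write `f = (x₁ - α₁)^v₁ · g` as a polynomial in `x₁` with coefficients in `K[x₂,…,xₙ]`, so that
`lazardStep α₁ f = g(α₁)`. Substituting `α₁` for `x₁` (and then the rest) gives
`f(α, xₙ) = 0^v₁ · (lazardStep α₁ f)(α₂,…,αₙ₋₁, xₙ)`, and `lazardStep α₁ f ≠ 0` because `v₁` is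
the full multiplicity of the root `α₁`. Induction on the number of variables finishes the proof;
for univariate `f` the substitution `x₁ ↦ X` is injective since `X` is transcendental.
-/

namespace MvPolynomial

theorem aeval_eq_eval₂_finSuccEquiv {R A : Type*} [CommSemiring R] [CommSemiring A]
    [Algebra R A] {n : ℕ} (σ : Fin (n + 1) → A) (f : MvPolynomial (Fin (n + 1)) R) :
    aeval σ f = (finSuccEquiv R n f).eval₂ (aeval (σ ∘ Fin.succ)).toRingHom (σ 0) := by
  induction f using MvPolynomial.induction_on with
  | C a => simp [finSuccEquiv_apply]
  | add p q hp hq => simp [hp, hq]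
  | mul_X p i hp =>
    refine Fin.cases ?_ (fun j => ?_) i <;> simp [hp, finSuccEquiv_X_zero, finSuccEquiv_X_succ]

end MvPolynomial

namespace Polynomial

theorem eval₂_apply_eq_zero_pow_rootMultiplicity_mul {R S : Type*} [CommRing R] [CommRing S]
    (φ : R →+* S) (p : R[X]) (a : R) :
    p.eval₂ φ (φ a) =
      0 ^ p.rootMultiplicity a * φ ((p /ₘ (X - C a) ^ p.rootMultiplicity a).eval a) := by
  conv_lhs => rw [← pow_mul_divByMonic_rootMultiplicity_eq p a]
  simp [eval₂_at_apply]

end Polynomial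

theorem lazardStep_ne_zero {K : Type*} [Field K] {n : ℕ} (a : K)
    {f : MvPolynomial (Fin (n + 1)) K} (hf : f ≠ 0) : lazardStep a f ≠ 0 :=
  eval_divByMonic_pow_rootMultiplicity_ne_zero _
    ((map_ne_zero_iff _ (MvPolynomial.finSuccEquiv K n).injective).mpr hf)

theorem aeval_snoc_eq_zero_pow_mul_aeval_lazardStep {K : Type*} [Field K] {n : ℕ}
    (f : MvPolynomial (Fin (n + 2)) K) (α : Fin (n + 1) → K) :
    MvPolynomial.aeval (Fin.snoc (fun i => Polynomial.C (α i)) Polynomial.X) f =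
      0 ^ (MvPolynomial.finSuccEquiv K (n + 1) f).rootMultiplicity (MvPolynomial.C (α 0)) *
        MvPolynomial.aeval (Fin.snoc (fun i => Polynomial.C (Fin.tail α i)) Polynomial.X)
          (lazardStep (α 0) f) := by
  have h_succ : (Fin.snoc (fun i => Polynomial.C (α i)) Polynomial.X : Fin (n + 2) → K[X]) ∘
      Fin.succ = Fin.snoc (fun i => Polynomial.C (Fin.tail α i)) Polynomial.X := by
    funext i
    refine Fin.lastCases ?_ (fun j => ?_) i
    · simp
    · rw [Function.comp_apply, Fin.succ_castSucc, Fin.snoc_castSucc, Fin.snoc_castSucc]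
      rfl
  have h_zero : (Fin.snoc (fun i => Polynomial.C (α i)) Polynomial.X : Fin (n + 2) → K[X]) 0 =
      MvPolynomial.aeval (Fin.snoc (fun i => Polynomial.C (Fin.tail α i)) Polynomial.X)
        (MvPolynomial.C (α 0)) := by
    rw [← Fin.castSucc_zero, Fin.snoc_castSucc, MvPolynomial.aeval_C]
    rfl
  rw [MvPolynomial.aeval_eq_eval₂_finSuccEquiv, h_succ, h_zero]
  exact eval₂_apply_eq_zero_pow_rootMultiplicity_mul _ _ _

theorem aeval_snoc_injective {K : Type*} [Field K] (α : Fin 0 → K) :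
    Function.Injective
      (MvPolynomial.aeval (R := K) (Fin.snoc (fun i => Polynomial.C (α i)) Polynomial.X)) := by
  refine (algebraicIndependent_unique_type_iff (ι := Fin 1)).mpr ?_
  rw [show (default : Fin 1) = Fin.last 0 from rfl, Fin.snoc_last]
  exact Polynomial.transcendental_X K

/-- For nonzero `f ∈ K[x₀,…,xₙ]` and `α ∈ Kⁿ`, the polynomial `f(α, xₙ)` is
identically zero iff one of the exponents produced by the Lazard evaluation of `f`
at `α` is positive. -/
theorem lazard_eval_substitution_zero_iff {K : Type*} [Field K] {n : ℕ}
    (f : MvPolynomial (Fin (n + 1)) K) (hf : f ≠ 0) (α : Fin n → K) :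
    MvPolynomial.aeval
        (Fin.snoc (fun i => Polynomial.C (α i)) Polynomial.X) f = (0 : Polynomial K) ↔
      ∃ i, 0 < lazardExps f α i := by
  induction n with
  | zero => simpa using (map_ne_zero_iff _ (aeval_snoc_injective α)).mpr hf
  | succ m ih =>
    rw [aeval_snoc_eq_zero_pow_mul_aeval_lazardStep, Fin.exists_fin_succ]
    simp only [lazardExps, Fin.cons_zero, Fin.cons_succ]
    rcases Nat.eq_zero_or_pos ((MvPolynomial.finSuccEquiv K (m + 1) f).rootMultiplicity
      (MvPolynomial.C (α 0))) with hv | hv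
    · simpa [hv] using ih _ (lazardStep_ne_zero _ hf) _
    · simp [hv, hv.ne']
end
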